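/- arXiv:2310.20415 — 7 statements merged into one kernel-verified Lean document; each statement's English description precedes it below -/
import Mathlib

section
/- The Shapley value of player i in a coalitional game v equals the sum over all coalitions S containing i of the dividend d^v(S) divided by |S|, where dividends are defined recursively by d^v(∅)=0 and d^v(S) = v(S) - Σ_{R ⊊ S} d^v(R). -/
open Finset

variable {ι : Type*} [Fintype ι] [DecidableEq ι]

/-- Dividends (Möbius inverse) of a coalitional game: d^v(S) = v(S) - Σ_{R ⊊ S} d^v(R). -/
noncomputable def dividend (v : Finset ι → ℝ) (S : Finset ι) : ℝ :=
  v S - ∑ R ∈ (S.powerset.erase S).attach, dividend v R.1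
termination_by S.card
decreasing_by
  have h := R.2
  simp only [mem_erase, mem_powerset] at h
  exact Finset.card_lt_card (Finset.ssubset_iff_subset_ne.mpr ⟨h.2, h.1⟩)

/-- The Shapley value Sh_i(v) = Σ_{S ⊆ N\{i}} (|N|-1-|S|)!|S|!/|N|! (v(S∪{i}) - v(S)). -/
noncomputable def shapley (v : Finset ι → ℝ) (i : ι) : ℝ :=
  ∑ S ∈ (univ.erase i).powerset,
    ((Nat.factorial (Fintype.card ι - 1 - S.card) * Nat.factorial S.card : ℕ) : ℝ) /
      (Nat.factorial (Fintype.card ι) : ℝ) *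
      (v (insert i S) - v S)

/-- Efficiency: payoffs sum to the worth of the grand coalition. -/
def Efficient (φ : (Finset ι → ℝ) → ι → ℝ) : Prop :=
  ∀ v : Finset ι → ℝ, v ∅ = 0 → ∑ i, φ v i = v univ

/-- Symmetry: interchangeable players get the same payoff. -/
def SymmetricRule (φ : (Finset ι → ℝ) → ι → ℝ) : Prop :=
  ∀ v : Finset ι → ℝ, v ∅ = 0 → ∀ i j : ι,
    (∀ S ⊆ univ \ ({i, j} : Finset ι), v (insert i S) = v (insert j S)) →
    φ v i = φ v j

/-- Null player: a player whose presence never changes any worth gets zero. -/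
def NullPlayerRule (φ : (Finset ι → ℝ) → ι → ℝ) : Prop :=
  ∀ v : Finset ι → ℝ, v ∅ = 0 → ∀ i : ι,
    (∀ S ⊆ univ \ ({i} : Finset ι), v (insert i S) = v S) → φ v i = 0

/-- Weak coalitional monotonicity. -/
def WeakCoalMono (φ : (Finset ι → ℝ) → ι → ℝ) : Prop :=
  ∀ v w : Finset ι → ℝ, v ∅ = 0 → w ∅ = 0 → ∀ M : Finset ι,
    v M ≥ w M → (∀ S : Finset ι, S ≠ M → v S = w S) →
    ∑ i ∈ M, φ v i ≥ ∑ i ∈ M, φ w i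

/-- Reallocation-proofness. -/
def ReallocProof (φ : (Finset ι → ℝ) → ι → ℝ) : Prop :=
  ∀ v w : Finset ι → ℝ, v ∅ = 0 → w ∅ = 0 → ∀ M : Finset ι,
    v M = w M →
    (∀ S ⊆ M, ∀ T ⊆ univ \ M, v (S ∪ T) - v S = w (S ∪ T) - w S) →
    ∑ i ∈ M, φ v i ≥ ∑ i ∈ M, φ w i

/-- Strong reallocation-proofness. -/
def StrongReallocProof (φ : (Finset ι → ℝ) → ι → ℝ) : Prop :=
  ∀ v w : Finset ι → ℝ, v ∅ = 0 → w ∅ = 0 → ∀ M : Finset ι,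
    (∀ T ⊆ univ \ M, v T = w T) → (∀ T : Finset ι, M ⊆ T → v T = w T) →
    ∑ i ∈ M, φ v i ≥ ∑ i ∈ M, φ w i

/-- Constrained marginality. -/
def ConstrainedMarg (φ : (Finset ι → ℝ) → ι → ℝ) : Prop :=
  ∀ v w : Finset ι → ℝ, v ∅ = 0 → w ∅ = 0 → ∀ i : ι,
    v univ = w univ →
    (∀ T ⊆ univ \ ({i} : Finset ι), v (insert i T) - v T = w (insert i T) - w T) →
    φ v i = φ w i

/-- Marginality. -/
def Marginality (φ : (Finset ι → ℝ) → ι → ℝ) : Prop :=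
  ∀ v w : Finset ι → ℝ, v ∅ = 0 → w ∅ = 0 → ∀ i : ι,
    (∀ T ⊆ univ \ ({i} : Finset ι), v (insert i T) - v T = w (insert i T) - w T) →
    φ v i = φ w i

/-- Strong monotonicity. -/
def StrongMono (φ : (Finset ι → ℝ) → ι → ℝ) : Prop :=
  ∀ v w : Finset ι → ℝ, v ∅ = 0 → w ∅ = 0 → ∀ i : ι,
    (∀ T ⊆ univ \ ({i} : Finset ι), v (insert i T) - v T ≥ w (insert i T) - w T) →
    φ v i ≥ φ w i

/-- Weak monotonicity. -/
def WeakMono (φ : (Finset ι → ℝ) → ι → ℝ) : Prop :=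
  ∀ v w : Finset ι → ℝ, v ∅ = 0 → w ∅ = 0 → ∀ i : ι,
    v univ ≥ w univ →
    (∀ T ⊆ univ \ ({i} : Finset ι), v (insert i T) - v T ≥ w (insert i T) - w T) →
    φ v i ≥ φ w i

/-- The unanimity game u_T. -/
def unanimity (T S : Finset ι) : ℝ := if T ⊆ S then 1 else 0


lemma sum_dividend_powerset (v : Finset ι → ℝ) (S : Finset ι) :
    ∑ T ∈ S.powerset, dividend v T = v S := by
  have h : dividend v S = v S - ∑ R ∈ S.powerset.erase S, dividend v R := by
    rw [dividend, Finset.sum_attach]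
  have hS : S ∈ S.powerset := Finset.mem_powerset_self S
  rw [← Finset.add_sum_erase _ _ hS, h]
  ring

lemma key_nat (m q : ℕ) :
    (q + 1) * ∑ j ∈ range (m + 1), m.choose j * Nat.factorial (m - j) * Nat.factorial (j + q)
      = Nat.factorial (m + q + 1) := by
  have hterm : ∀ j ∈ range (m + 1),
      m.choose j * Nat.factorial (m - j) * Nat.factorial (j + q)
        = Nat.factorial m * Nat.factorial q * (j + q).choose q := by
    intro j hj
    rw [mem_range, Nat.lt_succ_iff] at hj
    have h1 : m.choose j * Nat.factorial j * Nat.factorial (m - j) = Nat.factorial m :=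
      Nat.choose_mul_factorial_mul_factorial hj
    have h2 : (j + q).choose q * Nat.factorial q * Nat.factorial j = Nat.factorial (j + q) := by
      have := Nat.choose_mul_factorial_mul_factorial (Nat.le_add_left q j)
      simpa [Nat.add_sub_cancel] using this
    calc m.choose j * Nat.factorial (m - j) * Nat.factorial (j + q)
        = m.choose j * Nat.factorial (m - j) * ((j + q).choose q * Nat.factorial q * Nat.factorial j) := by rw [h2]
      _ = (m.choose j * Nat.factorial j * Nat.factorial (m - j)) * (Nat.factorial q * (j + q).choose q) := by ring
      _ = Nat.factorial m * Nat.factorial q * (j + q).choose q := by rw [h1]; ring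
  rw [Finset.sum_congr rfl hterm, ← Finset.mul_sum]
  have hhs : ∑ j ∈ range (m + 1), (j + q).choose q = (m + q + 1).choose (q + 1) := by
    have : ∑ j ∈ range (m + 1), (j + q).choose q = ∑ x ∈ Finset.Icc q (m + q), x.choose q := by
      rw [Finset.range_eq_Ico]
      apply Finset.sum_nbij' (fun j => j + q) (fun x => x - q)
      · intro a ha; simp only [Finset.mem_Ico] at ha; simp [Finset.mem_Icc]; omega
      · intro a ha; simp only [Finset.mem_Icc] at ha; simp [Finset.mem_Ico]; omega
      · intro a ha; simp only [Finset.mem_Ico] at ha; omega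
      · intro a ha; simp only [Finset.mem_Icc] at ha; omega
      · intros; rfl
    rw [this, Nat.sum_Icc_choose]
  rw [hhs]
  have : (m + q + 1).choose (q + 1) * Nat.factorial (q + 1) * Nat.factorial m
      = Nat.factorial (m + q + 1) := by
    have h := Nat.choose_mul_factorial_mul_factorial (n := m + q + 1) (k := q + 1) (by omega)
    have : m + q + 1 - (q + 1) = m := by omega
    rwa [this] at h
  calc (q + 1) * (Nat.factorial m * Nat.factorial q * (m + q + 1).choose (q + 1))
      = (m + q + 1).choose (q + 1) * ((q + 1) * Nat.factorial q) * Nat.factorial m := by ring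
    _ = (m + q + 1).choose (q + 1) * Nat.factorial (q + 1) * Nat.factorial m := by rw [Nat.factorial_succ]
    _ = Nat.factorial (m + q + 1) := this

lemma key_sum (n : ℕ) (E Q : Finset ι) (hQE : Q ⊆ E) (hE : E.card + 1 = n) :
    ∑ S ∈ E.powerset.filter (fun S => Q ⊆ S),
      ((Nat.factorial (n - 1 - S.card) * Nat.factorial S.card : ℕ) : ℝ) / (Nat.factorial n : ℝ)
      = 1 / ((Q.card : ℝ) + 1) := by
  obtain ⟨q, hq⟩ : ∃ q, Q.card = q := ⟨_, rfl⟩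
  obtain ⟨m, hm⟩ : ∃ m, (E \ Q).card = m := ⟨_, rfl⟩
  have hmq : m + q = E.card := by
    rw [← hm, ← hq, Finset.card_sdiff_of_subset hQE]
    have := Finset.card_le_card hQE
    omega
  have step1 : ∑ S ∈ E.powerset.filter (fun S => Q ⊆ S),
      ((Nat.factorial (n - 1 - S.card) * Nat.factorial S.card : ℕ) : ℝ) / (Nat.factorial n : ℝ)
      = ∑ R ∈ (E \ Q).powerset,
      ((Nat.factorial (n - 1 - (R.card + q)) * Nat.factorial (R.card + q) : ℕ) : ℝ) / (Nat.factorial n : ℝ) := by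
    apply Finset.sum_nbij' (fun S => S \ Q) (fun R => R ∪ Q)
    · intro S hS
      simp only [Finset.mem_filter, Finset.mem_powerset] at hS
      exact Finset.mem_powerset.mpr (Finset.sdiff_subset_sdiff hS.1 (le_refl _))
    · intro R hR
      simp only [Finset.mem_powerset] at hR
      simp only [Finset.mem_filter, Finset.mem_powerset]
      exact ⟨Finset.union_subset (hR.trans Finset.sdiff_subset) hQE, Finset.subset_union_right⟩
    · intro S hS
      simp only [Finset.mem_filter, Finset.mem_powerset] at hS
      exact Finset.sdiff_union_of_subset hS.2
    · intro R hR
      simp only [Finset.mem_powerset] at hR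
      exact Finset.union_sdiff_cancel_right (Finset.disjoint_of_subset_left hR Finset.sdiff_disjoint)
    · intro S hS
      simp only [Finset.mem_filter, Finset.mem_powerset] at hS
      have hcard : (S \ Q).card + q = S.card := by
        rw [Finset.card_sdiff_of_subset hS.2, ← hq]
        have := Finset.card_le_card hS.2
        omega
      rw [hcard]
  rw [step1, Finset.sum_powerset, hm]
  have hconst : ∀ j ∈ range (m + 1),
      ∑ R ∈ Finset.powersetCard j (E \ Q),
        ((Nat.factorial (n - 1 - (R.card + q)) * Nat.factorial (R.card + q) : ℕ) : ℝ) / (Nat.factorial n : ℝ)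
      = (m.choose j : ℝ) * (((Nat.factorial (m - j) * Nat.factorial (j + q) : ℕ) : ℝ) / (Nat.factorial n : ℝ)) := by
    intro j hj
    rw [mem_range, Nat.lt_succ_iff] at hj
    rw [Finset.sum_congr rfl (fun R hR => ?_), Finset.sum_const, Finset.card_powersetCard, hm,
      nsmul_eq_mul]
    have hRc : R.card = j := (Finset.mem_powersetCard.mp hR).2
    have h1 : n - 1 - (j + q) = m - j := by omega
    rw [hRc, h1]
  rw [Finset.sum_congr rfl hconst]
  have hsum : ∑ j ∈ range (m + 1), (m.choose j : ℝ) *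
      (((Nat.factorial (m - j) * Nat.factorial (j + q) : ℕ) : ℝ) / (Nat.factorial n : ℝ))
      = ((∑ j ∈ range (m + 1), m.choose j * Nat.factorial (m - j) * Nat.factorial (j + q) : ℕ) : ℝ)
        / (Nat.factorial n : ℝ) := by
    rw [Nat.cast_sum, Finset.sum_div]
    exact Finset.sum_congr rfl fun j _ => by push_cast; ring
  rw [hsum, hq]
  have hfacn : (0:ℝ) < (Nat.factorial n : ℝ) := by positivity
  have hq1 : (0:ℝ) < (q : ℝ) + 1 := by positivity
  rw [div_eq_div_iff hfacn.ne' hq1.ne', one_mul]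
  have hn : n = m + q + 1 := by omega
  have keyR : ((q:ℝ) + 1) * ((∑ j ∈ range (m + 1),
      m.choose j * Nat.factorial (m - j) * Nat.factorial (j + q) : ℕ) : ℝ)
      = (Nat.factorial (m + q + 1) : ℝ) := by exact_mod_cast key_nat m q
  rw [hn]
  linarith [keyR]

/-- The Shapley value equals the sum of equally split dividends over coalitions containing the player. -/
theorem shapley_eq_sum_dividends (v : Finset ι → ℝ) (hv : v ∅ = 0) (i : ι) :
    shapley v i =
      ∑ S ∈ univ.powerset.filter (fun S : Finset ι => i ∈ S),
        dividend v S / (S.card : ℝ) := by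
  classical
  set c : Finset ι → ℝ := fun S =>
    ((Nat.factorial (Fintype.card ι - 1 - S.card) * Nat.factorial S.card : ℕ) : ℝ) /
      (Nat.factorial (Fintype.card ι) : ℝ) with hc
  set P := (univ.erase i).powerset with hP
  have hE : (univ.erase i).card + 1 = Fintype.card ι := by
    rw [Finset.card_erase_of_mem (mem_univ i), Finset.card_univ]
    have : 0 < Fintype.card ι := @Fintype.card_pos ι _ ⟨i⟩
    omega
  -- Step A: marginal contribution as sum of dividends
  have stepA : ∀ S ∈ P, v (insert i S) - v S = ∑ Q ∈ S.powerset, dividend v (insert i Q) := by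
    intro S hS
    rw [hP, Finset.mem_powerset] at hS
    have hiS : i ∉ S := fun h => (Finset.mem_erase.mp (hS h)).1 rfl
    have hdisj : Disjoint S.powerset (Finset.image (insert i) S.powerset) := by
      rw [Finset.disjoint_left]
      intro T hT hT'
      obtain ⟨Q, _, rfl⟩ := Finset.mem_image.mp hT'
      exact hiS (Finset.mem_powerset.mp hT (Finset.mem_insert_self i Q))
    have hinj : ∀ Q ∈ S.powerset, ∀ Q' ∈ S.powerset, insert i Q = insert i Q' → Q = Q' := by
      intro Q hQ Q' hQ' h
      have h1 : i ∉ Q := fun hh => hiS (Finset.mem_powerset.mp hQ hh)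
      have h2 : i ∉ Q' := fun hh => hiS (Finset.mem_powerset.mp hQ' hh)
      rw [← Finset.erase_insert h1, ← Finset.erase_insert h2, h]
    rw [← sum_dividend_powerset v (insert i S), ← sum_dividend_powerset v S,
      Finset.powerset_insert, Finset.sum_union hdisj, Finset.sum_image hinj]
    ring
  -- Step B
  have stepB : shapley v i = ∑ Q ∈ P, dividend v (insert i Q) / ((Q.card : ℝ) + 1) := by
    unfold shapley
    rw [Finset.sum_congr rfl (fun S hS => by
      rw [stepA S hS, Finset.mul_sum])]
    have hfilter : ∀ S ∈ P, P.filter (fun Q => Q ⊆ S) = S.powerset := by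
      intro S hS
      rw [hP, Finset.mem_powerset] at hS
      ext Q
      simp only [Finset.mem_filter, Finset.mem_powerset, hP]
      exact ⟨fun h => h.2, fun h => ⟨h.trans hS, h⟩⟩
    have hiff : ∀ S ∈ P, ∑ Q ∈ S.powerset, c S * dividend v (insert i Q)
        = ∑ Q ∈ P, if Q ⊆ S then c S * dividend v (insert i Q) else 0 := by
      intro S hS
      rw [← hfilter S hS, Finset.sum_filter]
    rw [Finset.sum_congr rfl hiff, Finset.sum_comm]
    apply Finset.sum_congr rfl
    intro Q hQ
    have hQE : Q ⊆ univ.erase i := Finset.mem_powerset.mp hQ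
    have hkey := key_sum (Fintype.card ι) (univ.erase i) Q hQE hE
    calc ∑ S ∈ P, (if Q ⊆ S then c S * dividend v (insert i Q) else 0)
        = (∑ S ∈ P.filter (fun S => Q ⊆ S), c S) * dividend v (insert i Q) := by
          rw [← Finset.sum_filter, Finset.sum_mul]
      _ = dividend v (insert i Q) / ((Q.card : ℝ) + 1) := by
          rw [hP, hkey]; ring
  rw [stepB]
  -- Step C: reindex the RHS
  apply Finset.sum_nbij' (fun Q => insert i Q) (fun S => S.erase i)
  · intro Q hQ
    simp only [Finset.mem_filter, Finset.mem_powerset]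
    exact ⟨Finset.subset_univ _, Finset.mem_insert_self i Q⟩
  · intro S hS
    simp only [Finset.mem_filter, Finset.mem_powerset] at hS
    rw [hP, Finset.mem_powerset]
    exact Finset.erase_subset_erase i (Finset.subset_univ S)
  · intro Q hQ
    rw [hP, Finset.mem_powerset] at hQ
    have : i ∉ Q := fun h => (Finset.mem_erase.mp (hQ h)).1 rfl
    exact Finset.erase_insert this
  · intro S hS
    simp only [Finset.mem_filter, Finset.mem_powerset] at hS
    exact Finset.insert_erase hS.2
  · intro Q hQ
    rw [hP, Finset.mem_powerset] at hQ
    have hiQ : i ∉ Q := fun h => (Finset.mem_erase.mp (hQ h)).1 rfl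
    rw [Finset.card_insert_of_notMem hiQ]
    push_cast
    ring
end

section
/- The Shapley value satisfies reallocation-proofness: for any two coalitional games v, w on N and any coalition M ⊆ N, if v(M) = w(M) and v(S ∪ T) - v(S) = w(S ∪ T) - w(S) for all S ⊆ M and all T ⊆ N\M, then Σ_{i∈M} Sh_i(v) = Σ_{i∈M} Sh_i(w). -/
open Finset

variable {ι : Type*} [Fintype ι] [DecidableEq ι]

/-!
For `d = v - w`, the hypothesis with `S = R ∩ M`, `T = R \ M` gives `d R = d (R ∩ M)`, so every
player outside `M` is null in `d`. By additivity and efficiency of the Shapley value,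
`∑ i ∈ M, Sh_i(d) = ∑ i, Sh_i(d) = d N - d ∅ = d M = 0`.

Efficiency: in `∑ i, Sh_i(v)` the coefficient of `v T` is `|T| w(|T|-1) - (n-|T|) w(|T|)`, where
`w` is the Shapley weight; both terms equal `1 / n.choose |T|`, except that the first vanishes at
`T = ∅` and the second at `T = N`.
-/

noncomputable def shapleyWeight (n s : ℕ) : ℝ :=
  ((Nat.factorial (n - 1 - s) * Nat.factorial s : ℕ) : ℝ) / (Nat.factorial n : ℝ)

/-- `1 / n.choose t`, written so that the identities below are factorial cancellations. -/
noncomputable def inverseChoose (n t : ℕ) : ℝ :=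
  ((Nat.factorial t * Nat.factorial (n - t) : ℕ) : ℝ) / (Nat.factorial n : ℝ)

theorem shapley_eq_sum_shapleyWeight (v : Finset ι → ℝ) (i : ι) :
    shapley v i = ∑ S ∈ (univ.erase i).powerset,
      shapleyWeight (Fintype.card ι) S.card * (v (insert i S) - v S) :=
  rfl

theorem mul_shapleyWeight_pred (n t : ℕ) :
    t * shapleyWeight n (t - 1) = inverseChoose n t - if t = 0 then 1 else 0 := by
  have hn : (Nat.factorial n : ℝ) ≠ 0 := by positivity
  rcases Nat.eq_zero_or_pos t with rfl | ht
  · simp [inverseChoose, hn]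
  · have hsub : n - 1 - (t - 1) = n - t := by omega
    rw [if_neg ht.ne', sub_zero, shapleyWeight, inverseChoose, hsub, mul_div_assoc',
      ← Nat.mul_factorial_pred ht.ne']
    push_cast
    ring

theorem sub_mul_shapleyWeight {n t : ℕ} (ht : t ≤ n) :
    ((n - t : ℕ) : ℝ) * shapleyWeight n t = inverseChoose n t - if t = n then 1 else 0 := by
  have hn : (Nat.factorial n : ℝ) ≠ 0 := by positivity
  rcases ht.eq_or_lt with rfl | ht
  · simp [inverseChoose, hn]
  · have hsub : n - 1 - t = n - t - 1 := by omega
    rw [if_neg ht.ne, sub_zero, shapleyWeight, inverseChoose, hsub, mul_div_assoc',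
      ← Nat.mul_factorial_pred (Nat.sub_ne_zero_of_lt ht)]
    push_cast
    ring

theorem sum_sum_powerset_erase_insert {M : Type*} [AddCommMonoid M] (f : Finset ι → ℕ → M) :
    ∑ i, ∑ S ∈ (univ.erase i).powerset, f (insert i S) S.card =
      ∑ T : Finset ι, T.card • f T (T.card - 1) := by
  have hfiber : ∀ i, ∑ S ∈ (univ.erase i).powerset, f (insert i S) S.card =
      ∑ T ∈ univ.filter (i ∈ ·), f T (T.card - 1) := by
    intro i
    refine sum_nbij' (insert i) (·.erase i) ?_ ?_ ?_ ?_ ?_ <;> intro S hS <;>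
      simp only [mem_powerset, subset_erase, mem_filter, mem_univ, true_and] at hS
    · simp
    · simp [subset_erase]
    · exact erase_insert hS.2
    · exact insert_erase hS
    · rw [card_insert_of_notMem hS.2, Nat.add_sub_cancel]
  simp_rw [hfiber, ← sum_const]
  exact sum_comm' fun i T => by simp

theorem sum_sum_powerset_erase {M : Type*} [AddCommMonoid M] (f : Finset ι → M) :
    ∑ i, ∑ S ∈ (univ.erase i).powerset, f S =
      ∑ S : Finset ι, (Fintype.card ι - S.card) • f S := by
  rw [sum_comm' (t' := univ) (s' := fun S => Sᶜ)]
  · simp [card_compl]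
  · simp [subset_erase]

theorem sum_shapley (v : Finset ι → ℝ) : ∑ i, shapley v i = v univ - v ∅ := by
  have hcoeff : ∀ T : Finset ι, T.card • (shapleyWeight (Fintype.card ι) (T.card - 1) * v T) -
      (Fintype.card ι - T.card) • (shapleyWeight (Fintype.card ι) T.card * v T) =
        (if T = univ then v T else 0) - (if T = ∅ then v T else 0) := by
    intro T
    rw [nsmul_eq_mul, nsmul_eq_mul, ← mul_assoc, ← mul_assoc, mul_shapleyWeight_pred,
      sub_mul_shapleyWeight (card_le_univ T)]
    simp only [card_eq_zero, card_eq_iff_eq_univ]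
    split_ifs <;> ring
  simp only [shapley_eq_sum_shapleyWeight, mul_sub, sum_sub_distrib]
  rw [sum_sum_powerset_erase_insert (fun T s => shapleyWeight (Fintype.card ι) s * v T),
    sum_sum_powerset_erase (fun S => shapleyWeight (Fintype.card ι) S.card * v S),
    ← sum_sub_distrib, Fintype.sum_congr _ _ hcoeff, sum_sub_distrib, Fintype.sum_ite_eq',
    Fintype.sum_ite_eq']

theorem shapley_sub (v w : Finset ι → ℝ) (i : ι) :
    shapley (v - w) i = shapley v i - shapley w i := by
  simp only [shapley, ← sum_sub_distrib, Pi.sub_apply]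
  exact sum_congr rfl fun S _ => by ring

theorem shapley_eq_zero_of_null {v : Finset ι → ℝ} {i : ι}
    (hi : ∀ S : Finset ι, v (insert i S) = v S) : shapley v i = 0 := by
  simp [shapley, hi]

theorem sum_shapley_of_eq_inter {v : Finset ι → ℝ} {M : Finset ι}
    (hv : ∀ R : Finset ι, v R = v (R ∩ M)) : ∑ i ∈ M, shapley v i = v M - v ∅ := by
  have hnull : ∀ i ∉ M, shapley v i = 0 := fun i hi =>
    shapley_eq_zero_of_null fun S => by rw [hv, hv S, insert_inter_of_notMem hi]
  rw [sum_subset (subset_univ M) fun i _ hi => hnull i hi, sum_shapley, hv univ, univ_inter]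

/-- The Shapley value satisfies reallocation-proofness. -/
theorem shapley_reallocation_proof (v w : Finset ι → ℝ) (hv : v ∅ = 0) (hw : w ∅ = 0)
    (M : Finset ι) (hM : v M = w M)
    (hsyn : ∀ S ⊆ M, ∀ T ⊆ univ \ M, v (S ∪ T) - v S = w (S ∪ T) - w S) :
    ∑ i ∈ M, shapley v i = ∑ i ∈ M, shapley w i := by
  have hdiff : ∀ R : Finset ι, (v - w) R = (v - w) (R ∩ M) := by
    intro R
    have h := hsyn (R ∩ M) inter_subset_right (R \ M)
      (sdiff_subset_sdiff (subset_univ R) subset_rfl)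
    rw [union_comm, sdiff_union_inter] at h
    simp only [Pi.sub_apply]
    linarith
  have h := sum_shapley_of_eq_inter hdiff
  simp only [shapley_sub, sum_sub_distrib, Pi.sub_apply, hv, hw, hM] at h
  linarith
end

section
/- The Shapley value satisfies weak coalitional monotonicity: for any two coalitional games v, w on N and any coalition M ⊆ N, if v(M) ≥ w(M) and v(S) = w(S) for all S ≠ M, then Σ_{i∈M} Sh_i(v) ≥ Σ_{i∈M} Sh_i(w). -/
open Finset

variable {ι : Type*} [Fintype ι] [DecidableEq ι]

/-- The Shapley value satisfies weak coalitional monotonicity. -/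
theorem shapley_weak_coalitional_monotonicity (v w : Finset ι → ℝ)
    (hv : v ∅ = 0) (hw : w ∅ = 0) (M : Finset ι)
    (hM : v M ≥ w M) (hrest : ∀ S : Finset ι, S ≠ M → v S = w S) :
    ∑ i ∈ M, shapley v i ≥ ∑ i ∈ M, shapley w i := by
  rw [ge_iff_le]
  refine Finset.sum_le_sum fun i hi => ?_
  unfold shapley
  refine Finset.sum_le_sum fun S hS => ?_
  have hiS : i ∉ S := by
    rw [mem_powerset] at hS
    exact fun h => (Finset.mem_erase.mp (hS h)).1 rfl
  have hSne : S ≠ M := fun h => hiS (h ▸ hi)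
  have hvS : v S = w S := hrest S hSne
  have hcoef : (0:ℝ) ≤ ((Nat.factorial (Fintype.card ι - 1 - S.card) * Nat.factorial S.card : ℕ) : ℝ) / (Nat.factorial (Fintype.card ι) : ℝ) := by positivity
  rcases eq_or_ne (insert i S) M with h | h
  · have := h ▸ hM
    apply mul_le_mul_of_nonneg_left _ hcoef
    rw [hvS]
    linarith
  · rw [hvS, hrest _ h]
end

section
/- Let |N| ≥ 3. If an allocation rule φ on all coalitional games satisfies symmetry, efficiency, and strong reallocation-proofness, then φ is the equal division value, i.e., φ_i(v) = v(N)/|N| for all games v and players i. -/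
open Finset

variable {ι : Type*} [Fintype ι] [DecidableEq ι]

private lemma realloc_eq (φ : (Finset ι → ℝ) → ι → ℝ) (hR : StrongReallocProof φ)
    {v w : Finset ι → ℝ} (hv : v ∅ = 0) (hw : w ∅ = 0) (M : Finset ι)
    (h1 : ∀ T ⊆ univ \ M, v T = w T) (h2 : ∀ T : Finset ι, M ⊆ T → v T = w T) :
    ∑ i ∈ M, φ v i = ∑ i ∈ M, φ w i :=
  le_antisymm (hR w v hw hv M (fun T hT => (h1 T hT).symm) (fun T hT => (h2 T hT).symm))
    (hR v w hv hw M h1 h2)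

private lemma phi_dep (φ : (Finset ι → ℝ) → ι → ℝ) (hE : Efficient φ)
    (hR : StrongReallocProof φ) {v w : Finset ι → ℝ} (hv : v ∅ = 0) (hw : w ∅ = 0) (i : ι)
    (h1 : v {i} = w {i}) (h2 : v (univ.erase i) = w (univ.erase i))
    (h3 : v univ = w univ) : φ v i = φ w i := by
  have hset : (univ \ univ.erase i : Finset ι) = {i} := by
    ext x
    simp only [Finset.mem_sdiff, Finset.mem_erase, Finset.mem_singleton, Finset.mem_univ,
      true_and, not_and]
    tauto
  have hsum : ∑ k ∈ univ.erase i, φ v k = ∑ k ∈ univ.erase i, φ w k := by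
    apply realloc_eq φ hR hv hw
    · intro T hT
      rw [hset, Finset.subset_singleton_iff] at hT
      rcases hT with rfl | rfl
      · rw [hv, hw]
      · exact h1
    · intro T hT
      by_cases hi : i ∈ T
      · have hTu : T = univ := by
          apply Finset.eq_univ_iff_forall.mpr
          intro x
          by_cases hx : x = i
          · exact hx ▸ hi
          · exact hT (Finset.mem_erase.mpr ⟨hx, Finset.mem_univ x⟩)
        rw [hTu]; exact h3
      · have hTe : T = univ.erase i := by
          apply subset_antisymm _ hT
          intro x hx
          exact Finset.mem_erase.mpr ⟨fun e => hi (e ▸ hx), Finset.mem_univ x⟩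
        rw [hTe]; exact h2
  have ev := hE v hv
  have ew := hE w hw
  have hv' := Finset.add_sum_erase univ (φ v) (Finset.mem_univ i)
  have hw' := Finset.add_sum_erase univ (φ w) (Finset.mem_univ i)
  linarith


/-- With at least three players, symmetry, efficiency, and strong reallocation-proofness
characterize the equal division value. -/
theorem strong_realloc_char_equal_division (hn : 3 ≤ Fintype.card ι)
    (φ : (Finset ι → ℝ) → ι → ℝ)
    (hS : SymmetricRule φ) (hE : Efficient φ) (hR : StrongReallocProof φ) :
    ∀ v : Finset ι → ℝ, v ∅ = 0 → ∀ i : ι, φ v i = v univ / (Fintype.card ι : ℝ) := by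
  intro v hv i
  obtain ⟨j, hj⟩ := Fintype.exists_ne_of_one_lt_card (by omega) i
  have cuniv : (univ : Finset ι).card = Fintype.card ι := Finset.card_univ
  have cei : (univ.erase i).card = Fintype.card ι - 1 := by
    rw [Finset.card_erase_of_mem (Finset.mem_univ i), cuniv]
  have cej : (univ.erase j).card = Fintype.card ι - 1 := by
    rw [Finset.card_erase_of_mem (Finset.mem_univ j), cuniv]
  -- distinctness facts
  have card_ne : ∀ {A B : Finset ι}, A.card ≠ B.card → A ≠ B := by
    intro A B h hAB; exact h (by rw [hAB])
  have ne1 : ({i} : Finset ι) ≠ univ.erase i := card_ne (by rw [Finset.card_singleton, cei]; omega)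
  have ne2 : ({i} : Finset ι) ≠ univ := card_ne (by rw [Finset.card_singleton, cuniv]; omega)
  have ne3 : (univ.erase i : Finset ι) ≠ univ := card_ne (by rw [cei, cuniv]; omega)
  have ne4 : (∅ : Finset ι) ≠ {i} := card_ne (by simp)
  have ne5 : (∅ : Finset ι) ≠ univ.erase i := card_ne (by rw [Finset.card_empty, cei]; omega)
  have ne6 : (∅ : Finset ι) ≠ univ := card_ne (by rw [Finset.card_empty, cuniv]; omega)
  have ne7 : ({j} : Finset ι) ≠ {i} := fun h => hj (Finset.singleton_inj.mp h)
  have ne8 : ({j} : Finset ι) ≠ univ.erase i := card_ne (by rw [Finset.card_singleton, cei]; omega)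
  have ne9 : ({j} : Finset ι) ≠ univ := card_ne (by rw [Finset.card_singleton, cuniv]; omega)
  have ne10 : (univ.erase j : Finset ι) ≠ {i} := card_ne (by rw [cej, Finset.card_singleton]; omega)
  have ne11 : (univ.erase j : Finset ι) ≠ univ.erase i := by
    intro h
    have hi1 : i ∈ univ.erase j := Finset.mem_erase.mpr ⟨fun e => hj e.symm, Finset.mem_univ i⟩
    rw [h] at hi1
    exact (Finset.mem_erase.mp hi1).1 rfl
  have ne12 : (univ.erase j : Finset ι) ≠ univ := card_ne (by rw [cej, cuniv]; omega)
  -- the two auxiliary games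
  set z : Finset ι → ℝ := fun T => if T = univ then v univ else 0 with hzdef
  set g : Finset ι → ℝ := fun T =>
    if T = {i} then v {i} else if T = univ.erase i then v (univ.erase i) else z T with hgdef
  have hz0 : z ∅ = 0 := by simp only [hzdef, if_neg ne6]
  have hg0 : g ∅ = 0 := by simp only [hgdef, hzdef, if_neg ne4, if_neg ne5, if_neg ne6]
  have hzuniv : z univ = v univ := by simp only [hzdef, if_pos rfl]
  -- Step 1 : φ v i = φ g i
  have step1 : φ v i = φ g i := by
    apply phi_dep φ hE hR hv hg0 i
    · simp only [hgdef, if_pos rfl]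
    · simp only [hgdef, if_neg (Ne.symm ne1), if_pos rfl, if_true]
    · simp only [hgdef, hzdef, if_neg (Ne.symm ne2), if_neg (Ne.symm ne3), if_pos rfl, if_true]
  -- Step 2 : φ g i + φ g j = φ z i + φ z j
  have step2 : φ g i + φ g j = φ z i + φ z j := by
    have hpair : ∑ k ∈ ({i, j} : Finset ι), φ g k = ∑ k ∈ ({i, j} : Finset ι), φ z k := by
      apply realloc_eq φ hR hg0 hz0
      · intro T hT
        have hiT : i ∉ T := fun h =>
          (Finset.mem_sdiff.mp (hT h)).2 (Finset.mem_insert_self i {j})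
        have hjT : j ∉ T := fun h =>
          (Finset.mem_sdiff.mp (hT h)).2 (Finset.mem_insert_of_mem (Finset.mem_singleton_self j))
        have t1 : T ≠ {i} := fun h => hiT (h ▸ Finset.mem_singleton_self i)
        have t2 : T ≠ univ.erase i := fun h => hjT (h ▸ Finset.mem_erase.mpr ⟨hj, Finset.mem_univ j⟩)
        simp only [hgdef, if_neg t1, if_neg t2]
      · intro T hT
        have hiT : i ∈ T := hT (Finset.mem_insert_self i {j})
        have hjT : j ∈ T := hT (Finset.mem_insert_of_mem (Finset.mem_singleton_self j))
        have t1 : T ≠ {i} := fun h => hj (Finset.mem_singleton.mp (h ▸ hjT))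
        have t2 : T ≠ univ.erase i := fun h => (Finset.mem_erase.mp (h ▸ hiT)).1 rfl
        simp only [hgdef, if_neg t1, if_neg t2]
    rwa [Finset.sum_pair (Ne.symm hj), Finset.sum_pair (Ne.symm hj)] at hpair
  -- Step 3 : φ g j = φ z j
  have step3 : φ g j = φ z j := by
    apply phi_dep φ hE hR hg0 hz0 j
    · simp only [hgdef, if_neg ne7, if_neg ne8]
    · simp only [hgdef, if_neg ne10, if_neg ne11]
    · simp only [hgdef, if_neg (Ne.symm ne2), if_neg (Ne.symm ne3)]
  -- Step 4 : φ z k = v univ / n for all k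
  have hsym : ∀ k l : ι, φ z k = φ z l := by
    intro k l
    rcases eq_or_ne k l with rfl | hkl
    · rfl
    · apply hS z hz0 k l
      intro S hSsub
      have hlS : l ∉ S := fun h =>
        (Finset.mem_sdiff.mp (hSsub h)).2 (Finset.mem_insert_of_mem (Finset.mem_singleton_self l))
      have hkS : k ∉ S := fun h =>
        (Finset.mem_sdiff.mp (hSsub h)).2 (Finset.mem_insert_self k {l})
      have u1 : insert k S ≠ univ := fun h => by
        have : l ∈ insert k S := h ▸ Finset.mem_univ l
        rcases Finset.mem_insert.mp this with h' | h'
        · exact hkl h'.symm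
        · exact hlS h'
      have u2 : insert l S ≠ univ := fun h => by
        have : k ∈ insert l S := h ▸ Finset.mem_univ k
        rcases Finset.mem_insert.mp this with h' | h'
        · exact hkl h'
        · exact hkS h'
      simp only [hzdef, if_neg u1, if_neg u2]
  have hsumz : ∑ k, φ z k = v univ := by rw [hE z hz0, hzuniv]
  have hconst : ∑ k, φ z k = (Fintype.card ι : ℝ) * φ z i := by
    rw [Finset.sum_congr rfl (fun k _ => hsym k i), Finset.sum_const, Finset.card_univ,
      nsmul_eq_mul]
  have hcardpos : (0 : ℝ) < (Fintype.card ι : ℝ) := by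
    exact_mod_cast Nat.lt_of_lt_of_le (by norm_num) hn
  have step4 : φ z i = v univ / (Fintype.card ι : ℝ) := by
    field_simp
    linarith [hsumz, hconst]
  linarith [step1, step2, step3, step4]
end

section
/- If an allocation rule φ satisfies efficiency, then φ satisfies constrained marginality if and only if φ satisfies reallocation-proofness. -/
open Finset

variable {ι : Type*} [Fintype ι] [DecidableEq ι]

/-- Given efficiency, constrained marginality is equivalent to reallocation-proofness. -/
theorem constrainedMarg_iff_reallocProof (φ : (Finset ι → ℝ) → ι → ℝ)
    (hE : Efficient φ) : ConstrainedMarg φ ↔ ReallocProof φ := by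
  constructor
  · intro hCM v w hv hw M hvwM hcond
    have hUnion : M ∪ (univ \ M) = univ := Finset.union_sdiff_of_subset (subset_univ M)
    have hU : v univ = w univ := by
      have h := hcond M subset_rfl (univ \ M) subset_rfl
      rw [hUnion] at h
      linarith
    have key : ∀ i ∈ univ \ M, φ v i = φ w i := by
      intro i hi
      have hiM : i ∉ M := (mem_sdiff.mp hi).2
      refine hCM v w hv hw i hU ?_
      intro T hT
      have hSsub : T ∩ M ⊆ M := inter_subset_right
      have hT0 : T \ M ⊆ univ \ M := sdiff_subset_sdiff (subset_univ T) subset_rfl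
      have hT1 : insert i (T \ M) ⊆ univ \ M :=
        insert_subset (mem_sdiff.mpr ⟨mem_univ i, hiM⟩) hT0
      have h1 := hcond (T ∩ M) hSsub (T \ M) hT0
      have h2 := hcond (T ∩ M) hSsub (insert i (T \ M)) hT1
      have e1 : T ∩ M ∪ T \ M = T := by
        ext x; simp only [mem_union, mem_inter, mem_sdiff]; tauto
      have e2 : T ∩ M ∪ insert i (T \ M) = insert i T := by
        rw [Finset.union_insert, e1]
      rw [e1] at h1
      rw [e2] at h2
      linarith
    have hs : ∑ i ∈ univ \ M, φ v i = ∑ i ∈ univ \ M, φ w i :=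
      Finset.sum_congr rfl key
    have hv' := hE v hv
    have hw' := hE w hw
    have hsv : ∑ i ∈ univ \ M, φ v i + ∑ i ∈ M, φ v i = ∑ i, φ v i :=
      Finset.sum_sdiff (subset_univ M)
    have hsw : ∑ i ∈ univ \ M, φ w i + ∑ i ∈ M, φ w i = ∑ i, φ w i :=
      Finset.sum_sdiff (subset_univ M)
    linarith
  · intro hRP v w hv hw i hU hmarg
    have hins : insert i (univ \ {i}) = univ := by
      rw [Finset.sdiff_singleton_eq_erase, Finset.insert_erase (mem_univ i)]
    have hM : v (univ \ {i}) = w (univ \ {i}) := by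
      have h := hmarg (univ \ {i}) subset_rfl
      rw [hins] at h
      linarith
    have hcond : ∀ S ⊆ univ \ {i}, ∀ T ⊆ univ \ (univ \ {i}),
        v (S ∪ T) - v S = w (S ∪ T) - w S := by
      intro S hS T hT
      have hT' : T ⊆ {i} := by simpa using hT
      rcases Finset.subset_singleton_iff.mp hT' with rfl | rfl
      · simp
      · have e : S ∪ {i} = insert i S := by ext x; simp [or_comm]
        rw [e]
        exact hmarg S hS
    have h1 := hRP v w hv hw (univ \ {i}) hM hcond
    have h2 := hRP w v hw hv (univ \ {i}) hM.symm
      (fun S hS T hT => (hcond S hS T hT).symm)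
    have hs : ∑ j ∈ univ \ {i}, φ v j = ∑ j ∈ univ \ {i}, φ w j := le_antisymm h2 h1
    have hv' := hE v hv
    have hw' := hE w hw
    have hsv : ∑ j ∈ univ \ {i}, φ v j + ∑ j ∈ ({i} : Finset ι), φ v j = ∑ j, φ v j :=
      Finset.sum_sdiff (subset_univ {i})
    have hsw : ∑ j ∈ univ \ {i}, φ w j + ∑ j ∈ ({i} : Finset ι), φ w j = ∑ j, φ w j :=
      Finset.sum_sdiff (subset_univ {i})
    simp only [Finset.sum_singleton] at hsv hsw
    linarith
end

section
/- Reallocation-proofness is equivalent to the following dividend formulation: for all games v, w and coalitions M ⊆ N, if Σ_{T ⊆ M} d^v(T) = Σ_{T ⊆ M} d^w(T) and d^v(S) = d^w(S) whenever S ∩ (N\M) ≠ ∅, then Σ_{i∈M} φ_i(v) = Σ_{i∈M} φ_i(w). -/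
open Finset

variable {ι : Type*} [Fintype ι] [DecidableEq ι]

lemma dividend_eq_of (v w : Finset ι → ℝ) (M : Finset ι)
    (hf : ∀ Q, v Q - w Q = v (Q ∩ M) - w (Q ∩ M)) :
    ∀ R : Finset ι, ¬ R ⊆ M → dividend v R = dividend w R := by
  intro R
  induction R using Finset.strongInduction with
  | _ R ih =>
    intro hR
    rw [dividend, dividend, Finset.sum_attach (R.powerset.erase R) (dividend v),
      Finset.sum_attach (R.powerset.erase R) (dividend w)]
    have hset : (R.powerset.erase R).filter (fun Q => Q ⊆ M) = (R ∩ M).powerset := by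
      ext Q
      simp only [Finset.mem_filter, Finset.mem_erase, Finset.mem_powerset,
        Finset.subset_inter_iff]
      constructor
      · rintro ⟨⟨-, h1⟩, h2⟩; exact ⟨h1, h2⟩
      · rintro ⟨h1, h2⟩
        refine ⟨⟨?_, h1⟩, h2⟩
        rintro rfl; exact hR h2
    have hnot : ∑ Q ∈ (R.powerset.erase R).filter (fun Q => ¬ Q ⊆ M), dividend v Q =
        ∑ Q ∈ (R.powerset.erase R).filter (fun Q => ¬ Q ⊆ M), dividend w Q := by
      apply Finset.sum_congr rfl
      intro Q hQ
      simp only [Finset.mem_filter, Finset.mem_erase, Finset.mem_powerset] at hQ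
      exact ih Q (Finset.ssubset_iff_subset_ne.mpr ⟨hQ.1.2, hQ.1.1⟩) hQ.2
    have hv : ∑ Q ∈ R.powerset.erase R, dividend v Q =
        v (R ∩ M) + ∑ Q ∈ (R.powerset.erase R).filter (fun Q => ¬ Q ⊆ M), dividend v Q := by
      rw [← Finset.sum_filter_add_sum_filter_not (R.powerset.erase R) (fun Q => Q ⊆ M),
        hset, sum_dividend_powerset]
    have hw : ∑ Q ∈ R.powerset.erase R, dividend w Q =
        w (R ∩ M) + ∑ Q ∈ (R.powerset.erase R).filter (fun Q => ¬ Q ⊆ M), dividend w Q := by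
      rw [← Finset.sum_filter_add_sum_filter_not (R.powerset.erase R) (fun Q => Q ⊆ M),
        hset, sum_dividend_powerset]
    have := hf R
    rw [hv, hw, hnot]
    linarith

lemma realloc_hyps_of_dividend (v w : Finset ι → ℝ) (M : Finset ι)
    (H1 : ∑ T ∈ M.powerset, dividend v T = ∑ T ∈ M.powerset, dividend w T)
    (H2 : ∀ S : Finset ι, S ∩ (univ \ M) ≠ ∅ → dividend v S = dividend w S) :
    v M = w M ∧ ∀ S ⊆ M, ∀ T ⊆ univ \ M, v (S ∪ T) - v S = w (S ∪ T) - w S := by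
  constructor
  · rw [← sum_dividend_powerset v M, ← sum_dividend_powerset w M]; exact H1
  · intro S hS T hT
    have hsub : S.powerset ⊆ (S ∪ T).powerset :=
      Finset.powerset_mono.mpr Finset.subset_union_left
    have hv := Finset.sum_sdiff (f := dividend v) hsub
    have hw := Finset.sum_sdiff (f := dividend w) hsub
    rw [sum_dividend_powerset] at hv hw
    have heq : ∑ R ∈ (S ∪ T).powerset \ S.powerset, dividend v R =
        ∑ R ∈ (S ∪ T).powerset \ S.powerset, dividend w R := by
      apply Finset.sum_congr rfl
      intro R hR
      simp only [Finset.mem_sdiff, Finset.mem_powerset] at hR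
      apply H2
      have : ∃ x, x ∈ R ∧ x ∉ S := by
        by_contra h
        push_neg at h
        exact hR.2 h
      obtain ⟨x, hxR, hxS⟩ := this
      have hxT : x ∈ T := by
        have := hR.1 hxR
        rw [Finset.mem_union] at this
        tauto
      intro hemp
      have : x ∈ R ∩ (univ \ M) := Finset.mem_inter.mpr ⟨hxR, hT hxT⟩
      rw [hemp] at this
      exact absurd this (Finset.notMem_empty x)
    have hv2 := sum_dividend_powerset v S
    have hw2 := sum_dividend_powerset w S
    have hv3 := sum_dividend_powerset v (S ∪ T)
    have hw3 := sum_dividend_powerset w (S ∪ T)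
    linarith

/-- Reallocation-proofness is equivalent to its dividend formulation. -/
theorem reallocProof_iff_dividend_formulation (φ : (Finset ι → ℝ) → ι → ℝ) :
    ReallocProof φ ↔
      (∀ v w : Finset ι → ℝ, v ∅ = 0 → w ∅ = 0 → ∀ M : Finset ι,
        (∑ T ∈ M.powerset, dividend v T = ∑ T ∈ M.powerset, dividend w T) →
        (∀ S : Finset ι, S ∩ (univ \ M) ≠ ∅ → dividend v S = dividend w S) →
        ∑ i ∈ M, φ v i = ∑ i ∈ M, φ w i) := by
  constructor
  · intro hRP v w h0v h0w M H1 H2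
    obtain ⟨hvM, hmar⟩ := realloc_hyps_of_dividend v w M H1 H2
    obtain ⟨hwM, hmar'⟩ := realloc_hyps_of_dividend w v M H1.symm (fun S hS => (H2 S hS).symm)
    have h1 := hRP v w h0v h0w M hvM hmar
    have h2 := hRP w v h0w h0v M hwM hmar'
    linarith
  · intro Hd v w h0v h0w M hvM hcond
    have hf : ∀ Q, v Q - w Q = v (Q ∩ M) - w (Q ∩ M) := by
      intro Q
      have h := hcond (Q ∩ M) Finset.inter_subset_right (Q \ M)
        (by intro x hx
            simp only [Finset.mem_sdiff, Finset.mem_univ, true_and] at hx ⊢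
            exact hx.2)
      have hQ : Q ∩ M ∪ Q \ M = Q := by
        ext x
        simp only [Finset.mem_union, Finset.mem_inter, Finset.mem_sdiff]
        tauto
      rw [hQ] at h
      linarith
    apply ge_of_eq
    apply Hd v w h0v h0w M
    · rw [sum_dividend_powerset, sum_dividend_powerset]; exact hvM
    · intro S hS
      apply dividend_eq_of v w M hf
      intro hSM
      apply hS
      rw [Finset.eq_empty_iff_forall_notMem]
      intro x hx
      rw [Finset.mem_inter, Finset.mem_sdiff] at hx
      exact hx.2.2 (hSM hx.1)
end

section
/- If an allocation rule φ satisfies weak monotonicity, then it satisfies constrained marginality and weak coalitional monotonicity. -/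
open Finset

variable {ι : Type*} [Fintype ι] [DecidableEq ι]

/-- Weak monotonicity implies constrained marginality and weak coalitional monotonicity. -/
theorem weakMono_implies (φ : (Finset ι → ℝ) → ι → ℝ)
    (h : WeakMono φ) : ConstrainedMarg φ ∧ WeakCoalMono φ := by
  constructor
  · intro v w hv hw i huniv hmarg
    refine le_antisymm (h w v hw hv i huniv.le ?_) (h v w hv hw i huniv.ge ?_)
    · intro T hT; exact (hmarg T hT).le
    · intro T hT; exact (hmarg T hT).ge
  · intro v w hv hw M hM heq
    apply Finset.sum_le_sum
    intro i hi
    apply h v w hv hw i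
    · by_cases hMu : M = (univ : Finset ι)
      · exact hMu ▸ hM
      · exact (heq univ (fun e => hMu e.symm)).ge
    · intro T hT
      have hiT : i ∉ T := fun hh => by
        have := hT hh; simp at this
      by_cases h1 : insert i T = M
      · have hTne : T ≠ M := fun e => hiT (e ▸ hi)
        rw [heq T hTne]
        have : w (insert i T) ≤ v (insert i T) := h1 ▸ hM
        linarith
      · rw [heq (insert i T) h1]
        by_cases h2 : T = M
        · exact absurd (h2 ▸ hi) hiT
        · rw [heq T h2]
end
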